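/- Bellman-type law of total variance (Lemma: var of the paper, trajectory form): Let π be a policy, P a transition function, and c : S × A × {1,…,H} → ℝ≥0 a nonnegative cost function. For h ∈ {1,…,H−1} define μ(s,a,h) := Σ_{s'} P(s,a,h)(s') · J^{P,π,c}(s', h+1) and 𝕍(s,a,h) := Σ_{s'} P(s,a,h)(s') · (J^{P,π,c}(s', h+1) − μ(s,a,h))², and set 𝕍(s,a,H) := 0. Then Σ_{s∈S} Σ_{a∈A} Σ_{h=1}^H q(s,a,h) · 𝕍(s,a,h) ≤ Σ_{τ ∈ (S×A)^H} w(τ) · (Σ_{h=1}^H c(s_h(τ), a_h(τ), h) − J^{P,π,c}(s₀, 1))², where q(s,a,h) := Σ_{τ ∈ (S×A)^H} w(τ) · 𝟙[s_h(τ) = s and a_h(τ) = a]. -/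

import Mathlib

open Finset

/-- Finite-horizon occupancy measure `q_{P,π,(s̄,h̄)}`, defined recursively over layers. -/
noncomputable def occ {S A : Type*} [Fintype S] [Fintype A] [DecidableEq S]
    (π : S → ℕ → A → ℝ) (P : S → A → ℕ → S → ℝ) (sb : S) (hb : ℕ) :
    ℕ → S → A → ℝ
  | 0 => fun s a => if hb = 0 then (if s = sb then π s 0 a else 0) else 0
  | (h + 1) => fun s a =>
      if h + 1 < hb then 0
      else if h + 1 = hb then (if s = sb then π s (h + 1) a else 0)
      else π s (h + 1) a * ∑ s' : S, ∑ a' : A, P s' a' h s * occ π P sb hb h s' a'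

/-- State at (1-based) time `h ∈ {1,…,H}` of a trajectory `τ = (s_1,a_1,…,s_H,a_H)`. -/
noncomputable def stt {S A : Type*} [Nonempty S] (H : ℕ) (τ : Fin H → S × A) (h : ℕ) : S :=
  if hlt : h - 1 < H then (τ ⟨h - 1, hlt⟩).1 else Classical.arbitrary S

/-- Action at (1-based) time `h ∈ {1,…,H}` of a trajectory `τ = (s_1,a_1,…,s_H,a_H)`. -/
noncomputable def act {S A : Type*} [Nonempty A] (H : ℕ) (τ : Fin H → S × A) (h : ℕ) : A :=
  if hlt : h - 1 < H then (τ ⟨h - 1, hlt⟩).2 else Classical.arbitrary A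

/-- Weight of a trajectory:
`w(τ) = 𝟙[s_1 = s₀] · ∏_{h=1}^H π(s_h,h)(a_h) · ∏_{h=1}^{H−1} P(s_h,a_h,h)(s_{h+1})`. -/
noncomputable def wt {S A : Type*} [Nonempty S] [Nonempty A] [DecidableEq S]
    (H : ℕ) (s0 : S) (π : S → ℕ → A → ℝ) (P : S → A → ℕ → S → ℝ)
    (τ : Fin H → S × A) : ℝ :=
  (if stt H τ 1 = s0 then 1 else 0) *
    (∏ h ∈ Finset.Icc 1 H, π (stt H τ h) h (act H τ h)) *
    ∏ h ∈ Finset.Icc 1 (H - 1), P (stt H τ h) (act H τ h) h (stt H τ (h + 1))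

/-! The left-hand side is the expected sum of `𝕍` along a trajectory, the right-hand side the
expected squared deviation of its total cost, and the inequality follows by backward induction
along the trajectory. Given the pair `(s, a)` at time `t` and the next state `s'`, the
bias–variance identity `E (X - c)² = E (X - E X)² + (E X - c)²`, applied to the cost `X` collected
after time `t` (so `E X = J(s', t + 1)`), splits the squared deviation into that of the tail,
bounded by induction, and `(J(s', t + 1) - c)²`. Averaged over `s'`, the same identity bounds
the latter below by `𝕍(s, a, t)`; the square it discards is the variance due to the choice of `a`.

The occupancy measure enters only through `J`, which agrees with the backward Bellman recursion
`costToGo`: pairing the forward recursion of `occ` with the Bellman recursion telescopes. -/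

@[to_additive sum_Icc_one_eq_sum_fin]
lemma Finset.prod_Icc_one_eq_prod_fin {M : Type*} [CommMonoid M] (n : ℕ) (f : ℕ → M) :
    ∏ h ∈ Icc 1 n, f h = ∏ i : Fin n, f (1 + i) := by
  rw [← Ico_add_one_right_eq_Icc, prod_Ico_eq_prod_range, Nat.add_sub_cancel,
    ← Fin.prod_univ_eq_prod_range (fun i => f (1 + i))]

lemma Finset.sum_comm_pairs {α β γ δ M : Type*} [AddCommMonoid M] (s : Finset α) (t : Finset β)
    (u : Finset γ) (v : Finset δ) (F : α → β → γ → δ → M) :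
    ∑ x ∈ s, ∑ y ∈ t, ∑ z ∈ u, ∑ w ∈ v, F x y z w
      = ∑ z ∈ u, ∑ w ∈ v, ∑ x ∈ s, ∑ y ∈ t, F x y z w := by
  calc _ = ∑ p ∈ s ×ˢ t, ∑ q ∈ u ×ˢ v, F p.1 p.2 q.1 q.2 := by simp only [sum_product]
    _ = ∑ q ∈ u ×ˢ v, ∑ p ∈ s ×ˢ t, F p.1 p.2 q.1 q.2 := sum_comm
    _ = _ := by simp only [sum_product]

lemma Fin.sum_pi_eq_sum_sum_cons {X M : Type*} [Fintype X] [AddCommMonoid M] {n : ℕ}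
    (f : (Fin (n + 1) → X) → M) :
    ∑ σ, f σ = ∑ x : X, ∑ σ : Fin n → X, f (Fin.cons x σ) := by
  rw [← Fintype.sum_prod_type']
  exact (Fintype.sum_equiv (Fin.consEquiv fun _ => X) _ _ fun _ => rfl).symm

lemma sum_mul_sub_sq_eq {X R : Type*} [Fintype X] [CommRing R] (w f : X → R)
    (hw : ∑ x, w x = 1) (c : R) :
    ∑ x, w x * (f x - c) ^ 2
      = ∑ x, w x * (f x - ∑ y, w y * f y) ^ 2 + (∑ y, w y * f y - c) ^ 2 := by
  set m := ∑ y, w y * f y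
  have hexpand : ∀ x, w x * (f x - c) ^ 2
      = w x * (f x - m) ^ 2 + 2 * (m - c) * (w x * f x) - (2 * (m - c) * m - (m - c) ^ 2) * w x :=
    fun x => by ring
  rw [sum_congr rfl fun x _ => hexpand x, sum_sub_distrib, sum_add_distrib, ← mul_sum, ← mul_sum,
    hw]
  ring

section WeightedVar

variable {S : Type*} [Fintype S]

def weightedVar (p v : S → ℝ) : ℝ := ∑ s, p s * (v s - ∑ s', p s' * v s') ^ 2

@[simp]
lemma weightedVar_zero (p : S → ℝ) : weightedVar p 0 = 0 := by
  simp [weightedVar]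

lemma weightedVar_le_sum_mul_sub_sq {p : S → ℝ} (hp : ∑ s, p s = 1) (v : S → ℝ) (c : ℝ) :
    weightedVar p v ≤ ∑ s, p s * (v s - c) ^ 2 := by
  rw [sum_mul_sub_sq_eq p v hp c]
  exact le_add_of_nonneg_right (sq_nonneg _)

end WeightedVar

section Paths

variable {S A : Type*}

def pathCost {n : ℕ} (g : S → A → ℕ → ℝ) (t : ℕ) (σ : Fin n → S × A) : ℝ :=
  ∑ i, g (σ i).1 (σ i).2 (t + i)

lemma pathCost_cons {n : ℕ} (g : S → A → ℕ → ℝ) (t : ℕ) (x : S × A) (σ : Fin n → S × A) :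
    pathCost g t (Fin.cons x σ : Fin (n + 1) → S × A) = g x.1 x.2 t + pathCost g (t + 1) σ := by
  simp only [pathCost, Fin.sum_univ_succ, Fin.cons_zero, Fin.cons_succ, Fin.val_zero,
    Fin.val_succ, add_zero, add_assoc, add_comm 1]

variable [DecidableEq S] (π : S → ℕ → A → ℝ) (P : S → A → ℕ → S → ℝ)

/-- The weight of the path `σ = ((s_t, a_t), …, (s_{t+k}, a_{t+k}))` started in `s`. -/
def trajWeight (k t : ℕ) (s : S) (σ : Fin (k + 1) → S × A) : ℝ :=
  (if (σ 0).1 = s then 1 else 0) * (∏ i, π (σ i).1 (t + i) (σ i).2) *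
    ∏ i : Fin k, P (σ i.castSucc).1 (σ i.castSucc).2 (t + i) (σ i.succ).1

lemma trajWeight_cons (k t : ℕ) (s : S) (x : S × A) (σ : Fin (k + 1) → S × A) :
    trajWeight π P (k + 1) t s (Fin.cons x σ)
      = (if x.1 = s then 1 else 0) * π s t x.2 * P s x.2 t (σ 0).1 *
          trajWeight π P k (t + 1) (σ 0).1 σ := by
  rcases x with ⟨s₁, a⟩
  by_cases hs : s₁ = s
  · subst hs
    simp only [trajWeight, Fin.prod_univ_succ (n := k), Fin.prod_univ_succ (n := k + 1),
      Fin.cons_zero, Fin.cons_succ, ← Fin.succ_castSucc, Fin.val_zero, Fin.val_succ,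
      Fin.castSucc_zero, add_zero, add_assoc, add_comm 1, if_true]
    ring
  · simp [trajWeight, hs]

variable [Fintype S] [Fintype A]

lemma sum_trajWeight_zero_mul (t : ℕ) (s : S) (f : (Fin 1 → S × A) → ℝ) :
    ∑ σ, trajWeight π P 0 t s σ * f σ = ∑ a, π s t a * f (fun _ => (s, a)) := by
  rw [← (Equiv.funUnique (Fin 1) (S × A)).symm.sum_comp, Fintype.sum_prod_type]
  simp [trajWeight]
  rfl

lemma sum_trajWeight_succ_mul (k t : ℕ) (s : S) (f : (Fin (k + 2) → S × A) → ℝ) :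
    ∑ σ, trajWeight π P (k + 1) t s σ * f σ
      = ∑ a, π s t a * ∑ s', P s a t s' *
          ∑ σ, trajWeight π P k (t + 1) s' σ * f (Fin.cons (s, a) σ) := by
  have hstart : ∀ (a : A) (σ : Fin (k + 1) → S × A),
      P s a t (σ 0).1 * trajWeight π P k (t + 1) (σ 0).1 σ
        = ∑ s', P s a t s' * trajWeight π P k (t + 1) s' σ := by
    intro a σ
    simp [trajWeight, ite_mul, mul_ite, Finset.sum_ite_eq]
  rw [Fin.sum_pi_eq_sum_sum_cons, Fintype.sum_prod_type]
  simp only [trajWeight_cons, ite_mul, one_mul, zero_mul, sum_ite_irrel, sum_const_zero,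
    sum_ite_eq', mem_univ, if_true]
  refine sum_congr rfl fun a _ => ?_
  simp_rw [mul_assoc, ← mul_sum]
  congr 1
  calc ∑ σ, P s a t (σ 0).1 * (trajWeight π P k (t + 1) (σ 0).1 σ * f (Fin.cons (s, a) σ))
      = ∑ σ, ∑ s', P s a t s' * trajWeight π P k (t + 1) s' σ * f (Fin.cons (s, a) σ) := by
        simp_rw [← mul_assoc, hstart, sum_mul]
    _ = _ := by
        rw [sum_comm]
        simp_rw [mul_sum, mul_assoc]

end Paths

section Markov

variable {S A : Type*} [Fintype S] [Fintype A]
  (π : S → ℕ → A → ℝ) (P : S → A → ℕ → S → ℝ)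

/-- The expected cost `g` collected at the `n` times `t, …, t + n - 1`. -/
def costToGo (g : S → A → ℕ → ℝ) : ℕ → ℕ → S → ℝ
  | 0, _, _ => 0
  | n + 1, t, s => ∑ a, π s t a * (g s a t + ∑ s', P s a t s' * costToGo g n (t + 1) s')

@[simp]
lemma costToGo_zero (g : S → A → ℕ → ℝ) (t : ℕ) : costToGo π P g 0 t = 0 := rfl

structure IsMarkovOn (t k : ℕ) : Prop where
  policy : ∀ s h, t ≤ h → h ≤ t + k → π s h ∈ stdSimplex ℝ A
  transition : ∀ s a h, t ≤ h → h < t + k → P s a h ∈ stdSimplex ℝ S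

variable {π P}

lemma IsMarkovOn.succ {t k : ℕ} (hM : IsMarkovOn π P t (k + 1)) : IsMarkovOn π P (t + 1) k where
  policy s h h₁ h₂ := hM.policy s h (by omega) (by omega)
  transition s a h h₁ h₂ := hM.transition s a h (by omega) (by omega)

lemma IsMarkovOn.of_mem_Icc {m : ℕ} (hπ0 : ∀ s, ∀ h ∈ Icc 1 (m + 1), ∀ a, 0 ≤ π s h a)
    (hπ1 : ∀ s, ∀ h ∈ Icc 1 (m + 1), ∑ a, π s h a = 1)
    (hP0 : ∀ s a, ∀ h ∈ Icc 1 m, ∀ s', 0 ≤ P s a h s')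
    (hP1 : ∀ s a, ∀ h ∈ Icc 1 m, ∑ s', P s a h s' = 1) : IsMarkovOn π P 1 m where
  policy s h h₁ h₂ := ⟨hπ0 s h (mem_Icc.2 ⟨h₁, by omega⟩), hπ1 s h (mem_Icc.2 ⟨h₁, by omega⟩)⟩
  transition s a h h₁ h₂ :=
    ⟨hP0 s a h (mem_Icc.2 ⟨h₁, by omega⟩), hP1 s a h (mem_Icc.2 ⟨h₁, by omega⟩)⟩

variable [DecidableEq S]

lemma sum_trajWeight {k t : ℕ} (hM : IsMarkovOn π P t k) (s : S) :
    ∑ σ, trajWeight π P k t s σ = 1 := by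
  induction k generalizing t s with
  | zero =>
    simpa [(hM.policy s t le_rfl (by omega)).2] using sum_trajWeight_zero_mul π P t s 1
  | succ k ih =>
    have h := sum_trajWeight_succ_mul π P k t s 1
    simp only [Pi.one_apply, mul_one] at h
    simp only [h, ih hM.succ, mul_one, (hM.transition s _ t le_rfl (by omega)).2,
      (hM.policy s t le_rfl (by omega)).2]

lemma sum_trajWeight_mul_pathCost {k t : ℕ} (hM : IsMarkovOn π P t k) (g : S → A → ℕ → ℝ)
    (s : S) : ∑ σ, trajWeight π P k t s σ * pathCost g t σ = costToGo π P g (k + 1) t s := by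
  induction k generalizing t s with
  | zero => simp [sum_trajWeight_zero_mul, pathCost, costToGo]
  | succ k ih =>
    rw [sum_trajWeight_succ_mul, costToGo]
    refine sum_congr rfl fun a _ => ?_
    have hP := (hM.transition s a t le_rfl (by omega)).2
    simp_rw [pathCost_cons, mul_add, sum_add_distrib, ← sum_mul, sum_trajWeight hM.succ, one_mul,
      ih hM.succ, mul_add, sum_add_distrib, ← sum_mul, hP, one_mul]
    rw [mul_add]

lemma costToGo_weightedVar_le {N k t : ℕ} (hM : IsMarkovOn π P t k) (hN : t + k = N)
    (g : S → A → ℕ → ℝ) (s : S) :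
    costToGo π P (fun s a h => weightedVar (P s a h) (costToGo π P g (N - h) (h + 1))) (k + 1) t s
      ≤ ∑ σ, trajWeight π P k t s σ * (pathCost g t σ - costToGo π P g (k + 1) t s) ^ 2 := by
  set V := fun s a h => weightedVar (P s a h) (costToGo π P g (N - h) (h + 1))
  induction k generalizing t s with
  | zero =>
    subst hN
    simp only [costToGo, V, Nat.sub_self, costToGo_zero, weightedVar_zero, mul_zero,
      sum_const_zero, add_zero, sum_trajWeight_zero_mul]
    exact sum_nonneg fun a _ => mul_nonneg ((hM.policy s t le_rfl le_rfl).1 a) (sq_nonneg _)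
  | succ k ih =>
    rw [costToGo, sum_trajWeight_succ_mul]
    refine sum_le_sum fun a _ =>
      mul_le_mul_of_nonneg_left ?_ ((hM.policy s t le_rfl (by omega)).1 a)
    obtain ⟨hP0, hP1⟩ := hM.transition s a t le_rfl (by omega)
    have hV : V s a t = weightedVar (P s a t) (costToGo π P g (k + 1) (t + 1)) := by
      simp only [V, show N - t = k + 1 by omega]
    set c := costToGo π P g (k + 2) t s - g s a t with hc
    have hshift : ∀ x, g s a t + x - costToGo π P g (k + 2) t s = x - c := fun x => by
      rw [hc]; ring
    have hsplit : ∀ s', ∑ σ, trajWeight π P k (t + 1) s' σ *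
          (pathCost g t (Fin.cons (s, a) σ : Fin (k + 2) → S × A) - costToGo π P g (k + 2) t s) ^ 2
        = ∑ σ, trajWeight π P k (t + 1) s' σ *
            (pathCost g (t + 1) σ - costToGo π P g (k + 1) (t + 1) s') ^ 2
          + (costToGo π P g (k + 1) (t + 1) s' - c) ^ 2 := by
      intro s'
      simp_rw [pathCost_cons, hshift]
      rw [sum_mul_sub_sq_eq _ _ (sum_trajWeight hM.succ s') c, sum_trajWeight_mul_pathCost hM.succ]
    calc V s a t + ∑ s', P s a t s' * costToGo π P V (k + 1) (t + 1) s'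
        ≤ ∑ s', P s a t s' * (costToGo π P g (k + 1) (t + 1) s' - c) ^ 2
          + ∑ s', P s a t s' * ∑ σ, trajWeight π P k (t + 1) s' σ *
              (pathCost g (t + 1) σ - costToGo π P g (k + 1) (t + 1) s') ^ 2 :=
          add_le_add (hV ▸ weightedVar_le_sum_mul_sub_sq hP1 _ c)
            (sum_le_sum fun s' _ => mul_le_mul_of_nonneg_left (ih hM.succ (by omega) s') (hP0 s'))
      _ = _ := by simp_rw [hsplit, mul_add, sum_add_distrib, add_comm]

end Markov

section Occupancy

variable {S A : Type*} [Fintype S] [Fintype A] [DecidableEq S]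
  (π : S → ℕ → A → ℝ) (P : S → A → ℕ → S → ℝ) (sb : S) (hb : ℕ)

lemma occ_of_lt {h : ℕ} (hh : h < hb) (s : S) (a : A) : occ π P sb hb h s a = 0 := by
  cases h with
  | zero => simp [occ, hh.ne']
  | succ h => simp [occ, hh]

lemma occ_self (s : S) (a : A) : occ π P sb hb hb s a = if s = sb then π s hb a else 0 := by
  cases hb <;> simp [occ]

lemma occ_succ {h : ℕ} (hh : hb ≤ h) (s : S) (a : A) :
    occ π P sb hb (h + 1) s a
      = π s (h + 1) a * ∑ s', ∑ a', P s' a' h s * occ π P sb hb h s' a' := by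
  simp [occ, show ¬h + 1 < hb by omega, show h + 1 ≠ hb by omega]

lemma sum_occ_succ_mul {h : ℕ} (hh : hb ≤ h) (Q : S → A → ℝ) :
    ∑ s, ∑ a, occ π P sb hb (h + 1) s a * Q s a
      = ∑ s, ∑ a, occ π P sb hb h s a * ∑ s', P s a h s' * ∑ a', π s' (h + 1) a' * Q s' a' := by
  simp only [occ_succ π P sb hb hh, sum_mul, mul_sum]
  rw [sum_comm_pairs]
  exact sum_congr rfl fun _ _ => sum_congr rfl fun _ _ => sum_congr rfl fun _ _ =>
    sum_congr rfl fun _ _ => by ring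

lemma sum_Icc_occ_mul_eq {H n h : ℕ} (hh : hb ≤ h) (hn : h + n = H) (g : S → A → ℕ → ℝ) :
    ∑ h' ∈ Icc h H, ∑ s, ∑ a, occ π P sb hb h' s a * g s a h'
      = ∑ s, ∑ a, occ π P sb hb h s a *
          (g s a h + ∑ s', P s a h s' * costToGo π P g n (h + 1) s') := by
  induction n generalizing h with
  | zero => simp [← hn]
  | succ n ih =>
    rw [← add_sum_Ioc_eq_sum_Icc (by omega), ← Icc_add_one_left_eq_Ioc, ih (by omega) (by omega),
      sum_occ_succ_mul π P sb hb hh, ← sum_add_distrib]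
    refine sum_congr rfl fun s _ => ?_
    rw [← sum_add_distrib]
    refine sum_congr rfl fun a _ => ?_
    simp only [costToGo]
    ring

lemma sum_occ_mul_eq_costToGo {H : ℕ} (hb₁ : 1 ≤ hb) (hbH : hb ≤ H + 1) (g : S → A → ℕ → ℝ) :
    ∑ s, ∑ a, ∑ h ∈ Icc 1 H, occ π P sb hb h s a * g s a h = costToGo π P g (H + 1 - hb) hb sb := by
  have hbefore : ∀ h ∈ Icc 1 H, h ∉ Icc hb H → ∑ s, ∑ a, occ π P sb hb h s a * g s a h = 0 :=
    fun h h₁ h₂ => by simp_all [occ_of_lt π P sb hb (h := h) (by simp at h₁ h₂; omega)]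
  rw [sum_congr rfl fun s _ => sum_comm, sum_comm, ← sum_subset (Icc_subset_Icc_left hb₁) hbefore]
  rcases Nat.lt_or_ge H hb with hlt | hle
  · obtain rfl : hb = H + 1 := by omega
    simp
  · obtain ⟨n, rfl⟩ := Nat.exists_eq_add_of_le hle
    rw [sum_Icc_occ_mul_eq π P sb hb le_rfl rfl, show hb + n + 1 - hb = n + 1 by omega, costToGo]
    simp [occ_self, ite_mul]

end Occupancy

section Trajectories

variable {S A : Type*}

lemma stt_one_add [Nonempty S] {H : ℕ} (τ : Fin H → S × A) (i : Fin H) :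
    stt H τ (1 + i) = (τ i).1 := by
  simp [stt]

lemma act_one_add [Nonempty A] {H : ℕ} (τ : Fin H → S × A) (i : Fin H) :
    act H τ (1 + i) = (τ i).2 := by
  simp [act]

variable [Nonempty S] [Nonempty A]

lemma sum_Icc_stt_act_eq_pathCost {H : ℕ} (τ : Fin H → S × A) (g : S → A → ℕ → ℝ) :
    ∑ h ∈ Icc 1 H, g (stt H τ h) (act H τ h) h = pathCost g 1 τ := by
  simp only [sum_Icc_one_eq_sum_fin, stt_one_add, act_one_add, pathCost]

lemma wt_eq_trajWeight [Fintype S] [Fintype A] [DecidableEq S] (m : ℕ) (s0 : S)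
    (π : S → ℕ → A → ℝ) (P : S → A → ℕ → S → ℝ) (τ : Fin (m + 1) → S × A) :
    wt (m + 1) s0 π P τ = trajWeight π P m 1 s0 τ := by
  have hnext : ∀ i : Fin m, stt (m + 1) τ (1 + i + 1) = (τ i.succ).1 := fun i => by
    rw [← stt_one_add τ i.succ, Fin.val_succ, add_assoc]
  have hcur : ∀ i : Fin m, stt (m + 1) τ (1 + i) = (τ i.castSucc).1 := fun i =>
    stt_one_add τ i.castSucc
  have hcur' : ∀ i : Fin m, act (m + 1) τ (1 + i) = (τ i.castSucc).2 := fun i =>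
    act_one_add τ i.castSucc
  have hfirst : stt (m + 1) τ 1 = (τ 0).1 := by simpa using stt_one_add τ 0
  simp only [wt, trajWeight, prod_Icc_one_eq_prod_fin, Nat.add_sub_cancel, hnext, hcur, hcur',
    hfirst, stt_one_add, act_one_add]

end Trajectories

lemma sum_occupancy_mul_eq {S A T : Type*} [Fintype S] [Fintype A] [Fintype T] [DecidableEq S]
    [DecidableEq A] (w : T → ℝ) (st : T → ℕ → S) (ac : T → ℕ → A) (I : Finset ℕ)
    (F : S → A → ℕ → ℝ) :
    ∑ s, ∑ a, ∑ h ∈ I, (∑ τ, w τ * (if st τ h = s ∧ ac τ h = a then 1 else 0)) * F s a h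
      = ∑ τ, w τ * ∑ h ∈ I, F (st τ h) (ac τ h) h := by
  have hcollapse : ∀ τ h, ∑ s, ∑ a, (if st τ h = s ∧ ac τ h = a then F s a h else 0)
      = F (st τ h) (ac τ h) h := fun τ h => by simp [ite_and]
  simp only [sum_mul, mul_assoc, ite_mul, one_mul, zero_mul]
  rw [sum_comm_pairs, sum_comm]
  simp only [← mul_sum, ← hcollapse]

theorem bellman_law_of_total_variance_general
    {S A : Type*} [Fintype S] [Fintype A] [DecidableEq S] [DecidableEq A]
    [Nonempty S] [Nonempty A]
    (H : ℕ) (s0 : S)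
    (π : S → ℕ → A → ℝ)
    (hπ0 : ∀ s, ∀ h ∈ Finset.Icc 1 H, ∀ a, 0 ≤ π s h a)
    (hπ1 : ∀ s, ∀ h ∈ Finset.Icc 1 H, ∑ a : A, π s h a = 1)
    (P : S → A → ℕ → S → ℝ)
    (hP0 : ∀ s a, ∀ h ∈ Finset.Icc 1 (H - 1), ∀ s', 0 ≤ P s a h s')
    (hP1 : ∀ s a, ∀ h ∈ Finset.Icc 1 (H - 1), ∑ s' : S, P s a h s' = 1)
    (c : S → A → ℕ → ℝ) :
    let J : S → ℕ → ℝ := fun s h =>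
      ∑ s' : S, ∑ a' : A, ∑ h' ∈ Finset.Icc 1 H, occ π P s h h' s' a' * c s' a' h'
    let mu : S → A → ℕ → ℝ := fun s a h => ∑ s' : S, P s a h s' * J s' (h + 1)
    let V : S → A → ℕ → ℝ := fun s a h =>
      if h = H then 0 else ∑ s' : S, P s a h s' * (J s' (h + 1) - mu s a h) ^ 2
    let q : S → A → ℕ → ℝ := fun s a h =>
      ∑ τ : Fin H → S × A, wt H s0 π P τ *
        (if stt H τ h = s ∧ act H τ h = a then 1 else 0)
    ∑ s : S, ∑ a : A, ∑ h ∈ Finset.Icc 1 H, q s a h * V s a h ≤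
      ∑ τ : Fin H → S × A, wt H s0 π P τ *
        ((∑ h ∈ Finset.Icc 1 H, c (stt H τ h) (act H τ h) h) - J s0 1) ^ 2 := by
  intro J mu V q
  rcases H with _ | m
  · simp [wt]
    split_ifs <;> positivity
  have hM : IsMarkovOn π P 1 m := .of_mem_Icc hπ0 hπ1 hP0 hP1
  have hJ : ∀ s h, 1 ≤ h → h ≤ m + 2 → J s h = costToGo π P c (m + 2 - h) h s :=
    fun s h h₁ h₂ => sum_occ_mul_eq_costToGo π P s h h₁ h₂ c
  set V' := fun s a h => weightedVar (P s a h) (costToGo π P c (m + 1 - h) (h + 1))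
  have hV : ∀ s a, ∀ h ∈ Icc 1 (m + 1), V s a h = V' s a h := by
    intro s a h hh
    have hJ' : ∀ s', J s' (h + 1) = costToGo π P c (m + 1 - h) (h + 1) s' := fun s' => by
      rw [hJ s' (h + 1) (by omega) (by simp at hh; omega),
        show m + 2 - (h + 1) = m + 1 - h by omega]
    by_cases hlast : h = m + 1
    · subst hlast
      simp [V, V']
    · simp only [V, mu, V', weightedVar, if_neg hlast, hJ']
  calc ∑ s, ∑ a, ∑ h ∈ Icc 1 (m + 1), q s a h * V s a h
      = ∑ τ, wt (m + 1) s0 π P τ * ∑ h ∈ Icc 1 (m + 1), V (stt (m + 1) τ h) (act (m + 1) τ h) h :=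
        sum_occupancy_mul_eq _ _ _ _ _
    _ = ∑ τ, trajWeight π P m 1 s0 τ * pathCost V' 1 τ := by
        refine sum_congr rfl fun τ _ => ?_
        rw [wt_eq_trajWeight, sum_congr rfl fun h hh => hV _ _ h hh, sum_Icc_stt_act_eq_pathCost]
    _ = costToGo π P V' (m + 1) 1 s0 := sum_trajWeight_mul_pathCost hM V' s0
    _ ≤ ∑ τ, trajWeight π P m 1 s0 τ * (pathCost c 1 τ - costToGo π P c (m + 1) 1 s0) ^ 2 :=
        costToGo_weightedVar_le hM (add_comm 1 m) c s0
    _ = _ := by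
        refine sum_congr rfl fun τ _ => ?_
        rw [wt_eq_trajWeight, sum_Icc_stt_act_eq_pathCost, hJ s0 1 le_rfl (by omega)]
        rfl

/-- Bellman-type law of total variance (Lemma var, trajectory form): with
`J(s,h) = J^{P,π,c}(s,h)`, `μ(s,a,h) = ∑_{s'} P(s'|s,a,h) J(s',h+1)`,
`𝕍(s,a,h) = ∑_{s'} P(s'|s,a,h) (J(s',h+1) − μ(s,a,h))²` for `h < H` and `𝕍(s,a,H) = 0`,
`∑_{s,a,h} q(s,a,h) 𝕍(s,a,h) ≤ ∑_τ w(τ) (∑_h c(s_h(τ),a_h(τ),h) − J(s₀,1))²`. -/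
theorem bellman_law_of_total_variance
    {S A : Type*} [Fintype S] [Fintype A] [DecidableEq S] [DecidableEq A]
    [Nonempty S] [Nonempty A]
    (H : ℕ) (hH : 2 ≤ H) (s0 : S)
    (π : S → ℕ → A → ℝ)
    (hπ0 : ∀ s, ∀ h ∈ Finset.Icc 1 H, ∀ a, 0 ≤ π s h a)
    (hπ1 : ∀ s, ∀ h ∈ Finset.Icc 1 H, ∑ a : A, π s h a = 1)
    (P : S → A → ℕ → S → ℝ)
    (hP0 : ∀ s a, ∀ h ∈ Finset.Icc 1 (H - 1), ∀ s', 0 ≤ P s a h s')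
    (hP1 : ∀ s a, ∀ h ∈ Finset.Icc 1 (H - 1), ∑ s' : S, P s a h s' = 1)
    (c : S → A → ℕ → ℝ)
    (hc0 : ∀ s a, ∀ h ∈ Finset.Icc 1 H, 0 ≤ c s a h) :
    let J : S → ℕ → ℝ := fun s h =>
      ∑ s' : S, ∑ a' : A, ∑ h' ∈ Finset.Icc 1 H, occ π P s h h' s' a' * c s' a' h'
    let mu : S → A → ℕ → ℝ := fun s a h => ∑ s' : S, P s a h s' * J s' (h + 1)
    let V : S → A → ℕ → ℝ := fun s a h =>
      if h = H then 0 else ∑ s' : S, P s a h s' * (J s' (h + 1) - mu s a h) ^ 2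
    let q : S → A → ℕ → ℝ := fun s a h =>
      ∑ τ : Fin H → S × A, wt H s0 π P τ *
        (if stt H τ h = s ∧ act H τ h = a then 1 else 0)
    ∑ s : S, ∑ a : A, ∑ h ∈ Finset.Icc 1 H, q s a h * V s a h ≤
      ∑ τ : Fin H → S × A, wt H s0 π P τ *
        ((∑ h ∈ Finset.Icc 1 H, c (stt H τ h) (act H τ h) h) - J s0 1) ^ 2 :=
  bellman_law_of_total_variance_general H s0 π hπ0 hπ1 P hP0 hP1 c
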